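/- arXiv:2102.05802 — 2 statements merged into one kernel-verified Lean document; each statement's English description precedes it below -/
import Mathlib

section
/- If X is a mean-zero sub-Gaussian random variable with parameter N, i.e., E[exp(λX)] ≤ exp(λ²N²/2) for all real λ, then for every λ ∈ [0,1), E[exp(λX²/(2N²))] ≤ 1/√(1-λ). -/
/-!
For `G ~ 𝒩(0, v)` we have `E[exp(G x)] = exp(v x² / 2)`, so taking `G` independent of `X` and
swapping the integrals (Tonelli), `E[exp(v X² / 2)] = E_G[E_X[exp(G X)]] ≤ E_G[exp(N² G² / 2)]`.
With `v = λ / N²` the last Gaussian integral equals `1 / √(1 - λ)`.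
-/

open MeasureTheory Real ProbabilityTheory
open scoped NNReal

lemma lintegral_exp_mul_gaussianReal (v : ℝ≥0) (x : ℝ) :
    ∫⁻ s, ENNReal.ofReal (exp (s * x)) ∂gaussianReal 0 v
      = ENNReal.ofReal (exp (v * x ^ 2 / 2)) := by
  rw [← ofReal_integral_eq_lintegral_ofReal
    (by simpa only [mul_comm] using integrable_exp_mul_gaussianReal x)
    (ae_of_all _ fun _ => (exp_pos _).le)]
  congr 1
  simpa [mgf, mul_comm] using congrFun (mgf_fun_id_gaussianReal (μ := 0) (v := v)) x

lemma exp_sq_mul_gaussianPDFReal {v : ℝ≥0} (hv : v ≠ 0) {c : ℝ} (h : c * v < 1) (s : ℝ) :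
    exp (s ^ 2 * c / 2) * gaussianPDFReal 0 v s
      = 1 / √(1 - c * v) * gaussianPDFReal 0 (v / (1 - c * v).toNNReal) s := by
  have hcv : 0 < 1 - c * v := by linarith
  set w := v / (1 - c * v).toNNReal
  have hw : (w : ℝ) = v / (1 - c * v) := by
    rw [NNReal.coe_div, Real.coe_toNNReal _ hcv.le]
  have hexp : s ^ 2 * c / 2 + -s ^ 2 / (2 * v) = -s ^ 2 / (2 * w) := by
    rw [hw]; field_simp; ring
  have hsqrt : √(2 * π * w) = √(2 * π * v) / √(1 - c * v) := by
    rw [hw, ← sqrt_div' _ hcv.le, mul_div_assoc]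
  simp only [gaussianPDFReal, sub_zero]
  rw [hsqrt, ← hexp, exp_add]
  field_simp

lemma lintegral_exp_sq_gaussianReal {v : ℝ≥0} {c : ℝ} (h : c * v < 1) :
    ∫⁻ s, ENNReal.ofReal (exp (s ^ 2 * c / 2)) ∂gaussianReal 0 v
      = ENNReal.ofReal (1 / √(1 - c * v)) := by
  rcases eq_or_ne v 0 with rfl | hv
  · simp
  have hw : v / (1 - c * v).toNNReal ≠ 0 :=
    div_ne_zero hv (Real.toNNReal_pos.2 (by linarith)).ne'
  calc ∫⁻ s, ENNReal.ofReal (exp (s ^ 2 * c / 2)) ∂gaussianReal 0 v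
      = ∫⁻ s, ENNReal.ofReal (1 / √(1 - c * v))
          * gaussianPDF 0 (v / (1 - c * v).toNNReal) s := by
        rw [gaussianReal_of_var_ne_zero _ hv,
          lintegral_withDensity_eq_lintegral_mul _ (measurable_gaussianPDF _ _) (by fun_prop)]
        refine lintegral_congr fun s => ?_
        rw [Pi.mul_apply, gaussianPDF, gaussianPDF,
          ← ENNReal.ofReal_mul (gaussianPDFReal_nonneg _ _ _),
          ← ENNReal.ofReal_mul (by positivity), mul_comm, exp_sq_mul_gaussianPDFReal hv h]
    _ = ENNReal.ofReal (1 / √(1 - c * v)) := by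
        rw [lintegral_const_mul _ (measurable_gaussianPDF _ _), lintegral_gaussianPDF_eq_one _ hw,
          mul_one]

section

variable {Ω : Type*} [MeasurableSpace Ω] {μ : Measure Ω} {X : Ω → ℝ}

lemma integrable_exp_mul_of_integrable_exp_sq
    (hX : AEMeasurable X μ) {a : ℝ} (ha : 0 < a)
    (h : Integrable (fun ω => exp (a * X ω ^ 2 / 2)) μ) (t : ℝ) :
    Integrable (fun ω => exp (t * X ω)) μ := by
  refine (h.const_mul (exp (t ^ 2 / (2 * a)))).mono (by fun_prop) (ae_of_all _ fun ω => ?_)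
  rw [norm_of_nonneg (exp_pos _).le, norm_of_nonneg (by positivity), ← exp_add, exp_le_exp]
  -- `t x ≤ t² / (2a) + a x² / 2`
  have : 0 ≤ (t - a * X ω) ^ 2 / (2 * a) := by positivity
  field_simp at this ⊢
  nlinarith

lemma lintegral_exp_sq_eq_lintegral_lintegral_exp_mul [SFinite μ]
    (hX : AEMeasurable X μ) (v : ℝ≥0) :
    ∫⁻ ω, ENNReal.ofReal (exp (v * X ω ^ 2 / 2)) ∂μ
      = ∫⁻ s, ∫⁻ ω, ENNReal.ofReal (exp (s * X ω)) ∂μ ∂gaussianReal 0 v := by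
  simp_rw [← lintegral_exp_mul_gaussianReal]
  exact lintegral_lintegral_swap (by fun_prop)

end

theorem subGaussian_exp_sq_moment_general
    {Ω : Type*} [MeasurableSpace Ω] (μ : Measure Ω) [IsProbabilityMeasure μ]
    (X : Ω → ℝ) (hX : Measurable X) (N : ℝ) (hN : 0 < N)
    (hsg : ∀ l : ℝ, ∫ ω, Real.exp (l * X ω) ∂μ ≤ Real.exp (l ^ 2 * N ^ 2 / 2)) :
    ∀ l : ℝ, 0 ≤ l → l < 1 →
      ∫ ω, Real.exp (l * (X ω) ^ 2 / (2 * N ^ 2)) ∂μ ≤ 1 / Real.sqrt (1 - l) := by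
  intro l hl0 hl1
  rcases hl0.eq_or_lt with rfl | hl
  · simp
  set v := (l / N ^ 2).toNNReal
  have hv_pos : (0 : ℝ) < v := Real.toNNReal_pos.2 (by positivity)
  have hNv : N ^ 2 * v = l := by rw [Real.coe_toNNReal _ (by positivity)]; field_simp
  have hv : ∀ x : ℝ, l * x ^ 2 / (2 * N ^ 2) = v * x ^ 2 / 2 := fun x => by
    rw [← hNv]; field_simp
  simp_rw [hv]
  by_cases hint : Integrable (fun ω => exp (v * X ω ^ 2 / 2)) μ
  swap
  · rw [integral_undef hint]; positivity
  have hexp_int := integrable_exp_mul_of_integrable_exp_sq hX.aemeasurable hv_pos hint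
  rw [← ENNReal.ofReal_le_ofReal_iff (by positivity),
    ofReal_integral_eq_lintegral_ofReal hint (ae_of_all _ fun _ => (exp_pos _).le),
    lintegral_exp_sq_eq_lintegral_lintegral_exp_mul hX.aemeasurable, ← hNv,
    ← lintegral_exp_sq_gaussianReal (by rwa [hNv])]
  refine lintegral_mono fun s => ?_
  rw [← ofReal_integral_eq_lintegral_ofReal (hexp_int s) (ae_of_all _ fun _ => (exp_pos _).le)]
  exact ENNReal.ofReal_le_ofReal (hsg s)

/-- If `X` is a mean-zero sub-Gaussian random variable with parameter `N`, i.e.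
`E[exp(λX)] ≤ exp(λ²N²/2)` for all real `λ`, then for every `λ ∈ [0,1)`,
`E[exp(λX²/(2N²))] ≤ 1/√(1-λ)`. -/
theorem subGaussian_exp_sq_moment
    {Ω : Type*} [MeasurableSpace Ω] (μ : Measure Ω) [IsProbabilityMeasure μ]
    (X : Ω → ℝ) (hX : Measurable X) (N : ℝ) (hN : 0 < N)
    (hmean : ∫ ω, X ω ∂μ = 0)
    (hsg : ∀ l : ℝ, ∫ ω, Real.exp (l * X ω) ∂μ ≤ Real.exp (l ^ 2 * N ^ 2 / 2)) :
    ∀ l : ℝ, 0 ≤ l → l < 1 →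
      ∫ ω, Real.exp (l * (X ω) ^ 2 / (2 * N ^ 2)) ∂μ ≤ 1 / Real.sqrt (1 - l) :=
  subGaussian_exp_sq_moment_general μ X hX N hN hsg
end

section
/- The square root of the Jensen–Shannon divergence satisfies the triangle inequality: √JS(P‖Q) ≤ √JS(P‖R) + √JS(R‖Q) for any probability measures P, Q, R on a common measurable space. -/
open MeasureTheory

/-- Kullback–Leibler divergence `KL(μ‖ν) = ∫ log(dμ/dν) dμ`. -/
noncomputable def klDiv {α : Type*} [MeasurableSpace α] (μ ν : Measure α) : ℝ :=
  ∫ x, llr μ ν x ∂μ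

/-- Jensen–Shannon divergence `JS(P‖Q) = KL(P‖(P+Q)/2) + KL(Q‖(P+Q)/2)`. -/
noncomputable def jsDiv {α : Type*} [MeasurableSpace α] (P Q : Measure α) : ℝ :=
  klDiv P ((2 : ENNReal)⁻¹ • (P + Q)) + klDiv Q ((2 : ENNReal)⁻¹ • (P + Q))

/-!
Write `p, q` for the densities of `P, Q` with respect to a common dominating measure; then
`JS(P‖Q) = ∫ jsFun p q`. The scalar function has the representation
`jsFun a b = ∫₀^∞ s · Δ(1/(a+s), 1/(b+s)) ds`, where `Δ(u, v) = (u - v)² / (u + v)` is the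
triangular discrimination. The square root of `Δ` satisfies the triangle inequality (this reduces
to a polynomial identity), so Minkowski's inequality in `L²`, applied first in `s` and then in `x`,
passes the triangle inequality on to `√jsFun` and then to `√JS`.
-/

open Real Set Filter Topology
open scoped ENNReal

lemma Real.sqrt_le_sqrt_add_sqrt_of_sq_le {x y z : ℝ} (hy : 0 ≤ y) (hz : 0 ≤ z)
    (h : (x - y - z) ^ 2 ≤ 4 * y * z) : √x ≤ √y + √z := by
  have hcross : x - y - z ≤ 2 * (√y * √z) := by
    calc x - y - z ≤ √(4 * y * z) := le_sqrt_of_sq_le h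
      _ = 2 * (√y * √z) := by
        rw [mul_assoc, sqrt_mul (by norm_num), sqrt_mul hy, show (4 : ℝ) = 2 ^ 2 by norm_num,
          sqrt_sq (by norm_num)]
  rw [sqrt_le_left (by positivity)]
  nlinarith [sq_sqrt hy, sq_sqrt hz]

noncomputable def triangDiscr (u v : ℝ) : ℝ := (u - v) ^ 2 / (u + v)

lemma triangDiscr_nonneg {u v : ℝ} (hu : 0 ≤ u) (hv : 0 ≤ v) : 0 ≤ triangDiscr u v := by
  unfold triangDiscr; positivity

lemma sqrt_triangDiscr_le_add {u v w : ℝ} (hu : 0 < u) (hv : 0 < v) (hw : 0 < w) :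
    √(triangDiscr u v) ≤ √(triangDiscr u w) + √(triangDiscr w v) := by
  refine sqrt_le_sqrt_add_sqrt_of_sq_le (triangDiscr_nonneg hu.le hw.le)
    (triangDiscr_nonneg hw.le hv.le) ?_
  have key : 4 * triangDiscr u w * triangDiscr w v
      - (triangDiscr u v - triangDiscr u w - triangDiscr w v) ^ 2
      = 4 * ((u - v) * (u - w) * (w - v)) ^ 2 * (u * v + u * w + v * w)
        / ((u + v) * (u + w) * (w + v)) ^ 2 := by
    unfold triangDiscr
    field_simp
    ring
  have : 0 ≤ 4 * ((u - v) * (u - w) * (w - v)) ^ 2 * (u * v + u * w + v * w)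
      / ((u + v) * (u + w) * (w + v)) ^ 2 := by positivity
  linarith

section SqrtIntegral

variable {α : Type*} [MeasurableSpace α] {μ : Measure α} {f g h : α → ℝ}

lemma integrable_sqrt_mul_sqrt (hg : Integrable g μ) (hh : Integrable h μ)
    (hg0 : 0 ≤ᵐ[μ] g) (hh0 : 0 ≤ᵐ[μ] h) : Integrable (fun x ↦ √(g x) * √(h x)) μ := by
  refine ((hg.add hh).div_const 2).mono'
    ((continuous_sqrt.comp_aestronglyMeasurable hg.1).mul
      (continuous_sqrt.comp_aestronglyMeasurable hh.1)) ?_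
  filter_upwards [hg0, hh0] with x hgx hhx
  rw [norm_of_nonneg (by positivity), Pi.add_apply]
  nlinarith [sq_nonneg (√(g x) - √(h x)), sq_sqrt hgx, sq_sqrt hhx]

lemma memLp_two_sqrt (hg : Integrable g μ) (hg0 : 0 ≤ᵐ[μ] g) : MemLp (fun x ↦ √(g x)) 2 μ := by
  rw [memLp_two_iff_integrable_sq (continuous_sqrt.comp_aestronglyMeasurable hg.1)]
  refine hg.congr ?_
  filter_upwards [hg0] with x hgx using (sq_sqrt hgx).symm

lemma integral_sqrt_rpow_two (hg0 : 0 ≤ᵐ[μ] g) :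
    ∫ x, √(g x) ^ (2 : ℝ) ∂μ = ∫ x, g x ∂μ := by
  refine integral_congr_ae ?_
  filter_upwards [hg0] with x hgx
  rw [rpow_two, sq_sqrt hgx]

lemma integral_sqrt_mul_sqrt_le (hg : Integrable g μ) (hh : Integrable h μ)
    (hg0 : 0 ≤ᵐ[μ] g) (hh0 : 0 ≤ᵐ[μ] h) :
    ∫ x, √(g x) * √(h x) ∂μ ≤ √(∫ x, g x ∂μ) * √(∫ x, h x ∂μ) := by
  have := integral_mul_le_Lp_mul_Lq_of_nonneg HolderConjugate.two_two
    (ae_of_all _ fun x ↦ sqrt_nonneg (g x)) (ae_of_all _ fun x ↦ sqrt_nonneg (h x))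
    (by simpa using memLp_two_sqrt hg hg0) (by simpa using memLp_two_sqrt hh hh0)
  rwa [integral_sqrt_rpow_two hg0, integral_sqrt_rpow_two hh0, ← sqrt_eq_rpow,
    ← sqrt_eq_rpow] at this

lemma sqrt_integral_le_add_of_sqrt_le (hf : Integrable f μ) (hg : Integrable g μ)
    (hh : Integrable h μ) (hf0 : 0 ≤ᵐ[μ] f) (hg0 : 0 ≤ᵐ[μ] g) (hh0 : 0 ≤ᵐ[μ] h)
    (hfgh : ∀ᵐ x ∂μ, √(f x) ≤ √(g x) + √(h x)) :
    √(∫ x, f x ∂μ) ≤ √(∫ x, g x ∂μ) + √(∫ x, h x ∂μ) := by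
  have hgh := integrable_sqrt_mul_sqrt hg hh hg0 hh0
  have hpointwise : ∫ x, f x ∂μ ≤ ∫ x, (g x + h x + 2 * (√(g x) * √(h x))) ∂μ := by
    refine integral_mono_ae hf ((hg.add hh).add (hgh.const_mul 2)) ?_
    filter_upwards [hfgh, hf0, hg0, hh0] with x hx hfx hgx hhx
    nlinarith [sq_sqrt hfx, sq_sqrt hgx, sq_sqrt hhx, sqrt_nonneg (f x), sqrt_nonneg (g x),
      sqrt_nonneg (h x)]
  rw [integral_add (f := fun x ↦ g x + h x) (hg.add hh) (hgh.const_mul 2), integral_add hg hh,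
    integral_const_mul] at hpointwise
  rw [sqrt_le_left (by positivity)]
  nlinarith [integral_sqrt_mul_sqrt_le hg hh hg0 hh0, sq_sqrt (integral_nonneg_of_ae hg0),
    sq_sqrt (integral_nonneg_of_ae hh0)]

end SqrtIntegral

noncomputable def klMidFun (a b : ℝ) : ℝ := a * log (a / ((a + b) / 2))

noncomputable def jsFun (a b : ℝ) : ℝ := klMidFun a b + klMidFun b a

lemma abs_klMidFun_le {a b : ℝ} (ha : 0 ≤ a) (hb : 0 ≤ b) : |klMidFun a b| ≤ a + b := by
  rcases ha.eq_or_lt with rfl | ha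
  · simpa [klMidFun] using hb
  have ht : 0 < a / ((a + b) / 2) := by positivity
  have ht2 : a / ((a + b) / 2) ≤ 2 := by rw [div_le_iff₀ (by positivity)]; linarith
  have hinv : a * (a / ((a + b) / 2))⁻¹ = (a + b) / 2 := by field_simp
  have hlow := mul_le_mul_of_nonneg_left (one_sub_inv_le_log_of_pos ht) ha.le
  have hup := mul_le_mul_of_nonneg_left (log_le_sub_one_of_pos ht) ha.le
  rw [klMidFun, abs_le]
  constructor <;> nlinarith

lemma mul_log_div_mid {a b : ℝ} (ha : 0 ≤ a) (hb : 0 ≤ b) :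
    a * log (a / ((a + b) / 2)) = a * log a - a * log ((a + b) / 2) := by
  rcases ha.eq_or_lt with rfl | ha
  · simp
  rw [log_div ha.ne' (by positivity), mul_sub]

noncomputable def jsIntegrand (a b s : ℝ) : ℝ := s * triangDiscr (a + s)⁻¹ (b + s)⁻¹

lemma jsIntegrand_nonneg {a b s : ℝ} (ha : 0 ≤ a) (hb : 0 ≤ b) (hs : 0 ≤ s) :
    0 ≤ jsIntegrand a b s :=
  mul_nonneg hs (triangDiscr_nonneg (by positivity) (by positivity))

noncomputable def jsPrimitive (a b s : ℝ) : ℝ :=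
  (a + b) * log ((a + b) / 2 + s) - a * log (a + s) - b * log (b + s)

lemma hasDerivAt_jsPrimitive {a b s : ℝ} (ha : 0 ≤ a) (hb : 0 ≤ b) (hs : 0 < s) :
    HasDerivAt (jsPrimitive a b) (jsIntegrand a b s) s := by
  have hlog {c : ℝ} (hc : 0 < c + s) : HasDerivAt (fun t ↦ log (c + t)) (c + s)⁻¹ s := by
    simpa using ((hasDerivAt_id s).const_add c).log hc.ne'
  refine (((hlog (c := (a + b) / 2) (by positivity)).const_mul (a + b)).sub
    ((hlog (c := a) (by positivity)).const_mul a)).sub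
    ((hlog (c := b) (by positivity)).const_mul b) |>.congr_deriv ?_
  have : 0 < a + s := by positivity
  have : 0 < b + s := by positivity
  have : 0 < (a + b) / 2 + s := by positivity
  unfold jsIntegrand triangDiscr
  field_simp
  ring

lemma tendsto_jsPrimitive_atTop (a b : ℝ) : Tendsto (jsPrimitive a b) atTop (𝓝 0) := by
  have hlim (c : ℝ) : Tendsto (fun s ↦ c * (log (s + c) - log s)) atTop (𝓝 0) := by
    simpa using (tendsto_log_comp_add_sub_log c).const_mul c
  have := ((hlim ((a + b) / 2)).const_mul 2).sub (hlim a) |>.sub (hlim b)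
  simp only [mul_zero, sub_zero] at this
  refine this.congr fun s ↦ ?_
  simp only [jsPrimitive, add_comm s]
  ring

lemma continuousAt_mul_log_add {c d : ℝ} (h : c = 0 ∨ 0 < d) :
    ContinuousAt (fun s ↦ c * log (d + s)) 0 := by
  rcases h with rfl | hd
  · simpa using continuousAt_const
  · exact ((continuous_const_add d).continuousAt.log (by simpa using hd.ne')).const_mul c

lemma continuousAt_jsPrimitive_zero {a b : ℝ} (ha : 0 ≤ a) (hb : 0 ≤ b) :
    ContinuousAt (jsPrimitive a b) 0 := by
  have hab : a + b = 0 ∨ 0 < (a + b) / 2 := by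
    rcases (add_nonneg ha hb).eq_or_lt with h | h
    · exact .inl h.symm
    · exact .inr (by positivity)
  exact ((continuousAt_mul_log_add hab).sub
    (continuousAt_mul_log_add (ha.eq_or_lt.imp Eq.symm id))).sub
    (continuousAt_mul_log_add (hb.eq_or_lt.imp Eq.symm id))

lemma jsPrimitive_zero {a b : ℝ} (ha : 0 ≤ a) (hb : 0 ≤ b) : jsPrimitive a b 0 = -jsFun a b := by
  rw [jsFun, klMidFun, klMidFun, mul_log_div_mid ha hb, mul_log_div_mid hb ha, add_comm b a,
    jsPrimitive]
  simp only [add_zero]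
  ring

lemma integrableOn_jsIntegrand {a b : ℝ} (ha : 0 ≤ a) (hb : 0 ≤ b) :
    IntegrableOn (jsIntegrand a b) (Ioi 0) :=
  integrableOn_Ioi_deriv_of_nonneg (continuousAt_jsPrimitive_zero ha hb).continuousWithinAt
    (fun _ hs ↦ hasDerivAt_jsPrimitive ha hb hs)
    (fun _ hs ↦ jsIntegrand_nonneg ha hb (le_of_lt hs))
    (tendsto_jsPrimitive_atTop a b)

lemma integral_jsIntegrand {a b : ℝ} (ha : 0 ≤ a) (hb : 0 ≤ b) :
    ∫ s in Ioi 0, jsIntegrand a b s = jsFun a b := by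
  rw [integral_Ioi_of_hasDerivAt_of_nonneg
    (continuousAt_jsPrimitive_zero ha hb).continuousWithinAt
    (fun _ hs ↦ hasDerivAt_jsPrimitive ha hb hs)
    (fun _ hs ↦ jsIntegrand_nonneg ha hb (le_of_lt hs))
    (tendsto_jsPrimitive_atTop a b), jsPrimitive_zero ha hb, zero_sub, neg_neg]

lemma jsFun_nonneg {a b : ℝ} (ha : 0 ≤ a) (hb : 0 ≤ b) : 0 ≤ jsFun a b := by
  rw [← integral_jsIntegrand ha hb]
  exact setIntegral_nonneg measurableSet_Ioi fun _ hs ↦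
    jsIntegrand_nonneg ha hb (le_of_lt hs)

lemma sqrt_jsFun_le_add {a b c : ℝ} (ha : 0 ≤ a) (hb : 0 ≤ b) (hc : 0 ≤ c) :
    √(jsFun a b) ≤ √(jsFun a c) + √(jsFun c b) := by
  rw [← integral_jsIntegrand ha hb, ← integral_jsIntegrand ha hc, ← integral_jsIntegrand hc hb]
  have hnonneg {a b : ℝ} (ha : 0 ≤ a) (hb : 0 ≤ b) :
      0 ≤ᵐ[volume.restrict (Ioi 0)] jsIntegrand a b := by
    filter_upwards [ae_restrict_mem measurableSet_Ioi] with s hs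
    exact jsIntegrand_nonneg ha hb (le_of_lt hs)
  refine sqrt_integral_le_add_of_sqrt_le (integrableOn_jsIntegrand ha hb)
    (integrableOn_jsIntegrand ha hc) (integrableOn_jsIntegrand hc hb)
    (hnonneg ha hb) (hnonneg ha hc) (hnonneg hc hb) ?_
  filter_upwards [ae_restrict_mem measurableSet_Ioi] with s (hs : 0 < s)
  simp only [jsIntegrand, sqrt_mul hs.le, ← mul_add]
  exact mul_le_mul_of_nonneg_left
    (sqrt_triangDiscr_le_add (by positivity) (by positivity) (by positivity)) (sqrt_nonneg s)

section Densities

variable {α : Type*} [MeasurableSpace α]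

lemma klDiv_eq_integral_mul_log_div {P ν μ : Measure α} [SigmaFinite P] [SigmaFinite ν]
    [SigmaFinite μ] (hPν : P ≪ ν) (hP : P ≪ μ) (hν : ν ≪ μ) :
    klDiv P ν = ∫ x, (P.rnDeriv μ x).toReal *
      log ((P.rnDeriv μ x).toReal / (ν.rnDeriv μ x).toReal) ∂μ := by
  rw [integral_toReal_rnDeriv_mul hP, klDiv]
  refine integral_congr_ae ?_
  filter_upwards [hPν.ae_le (Measure.rnDeriv_eq_div hP hν)] with x hx
  rw [llr, hx, ENNReal.toReal_div]

lemma toReal_rnDeriv_smul_add {c : ℝ≥0∞} (hc : c ≠ ∞) (P Q μ : Measure α) [IsFiniteMeasure P]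
    [IsFiniteMeasure Q] [SigmaFinite μ] :
    (fun x ↦ ((c • (P + Q)).rnDeriv μ x).toReal)
      =ᵐ[μ] fun x ↦ c.toReal * ((P.rnDeriv μ x).toReal + (Q.rnDeriv μ x).toReal) := by
  filter_upwards [Measure.rnDeriv_smul_left_of_ne_top (P + Q) μ hc, Measure.rnDeriv_add P Q μ,
    Measure.rnDeriv_lt_top P μ, Measure.rnDeriv_lt_top Q μ] with x hsmul hadd hPx hQx
  rw [hsmul, Pi.smul_apply, hadd, Pi.add_apply, smul_eq_mul, ENNReal.toReal_mul,
    ENNReal.toReal_add hPx.ne hQx.ne]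

lemma klDiv_mid_eq_integral {P Q μ : Measure α} [IsFiniteMeasure P] [IsFiniteMeasure Q]
    [SigmaFinite μ] (hP : P ≪ μ) (hQ : Q ≪ μ) :
    klDiv P ((2 : ℝ≥0∞)⁻¹ • (P + Q))
      = ∫ x, klMidFun (P.rnDeriv μ x).toReal (Q.rnDeriv μ x).toReal ∂μ := by
  have hPM : P ≪ (2 : ℝ≥0∞)⁻¹ • (P + Q) :=
    (Measure.AbsolutelyContinuous.rfl.add_right Q).trans
      (Measure.absolutelyContinuous_smul (by simp))
  have := (P + Q).smul_finite (c := 2⁻¹) (by simp)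
  rw [klDiv_eq_integral_mul_log_div hPM hP
    (Measure.smul_absolutelyContinuous.trans (hP.add_left hQ))]
  refine integral_congr_ae ?_
  filter_upwards [toReal_rnDeriv_smul_add (c := 2⁻¹) (by simp) P Q μ] with x hx
  rw [hx, klMidFun]
  simp [div_eq_inv_mul]

lemma integrable_klMidFun (P Q μ : Measure α) [IsFiniteMeasure P] [IsFiniteMeasure Q]
    [IsFiniteMeasure μ] :
    Integrable (fun x ↦ klMidFun (P.rnDeriv μ x).toReal (Q.rnDeriv μ x).toReal) μ := by
  have hp := (Measure.measurable_rnDeriv P μ).ennreal_toReal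
  have hq := (Measure.measurable_rnDeriv Q μ).ennreal_toReal
  refine (Measure.integrable_toReal_rnDeriv (μ := P).add (Measure.integrable_toReal_rnDeriv (μ := Q))).mono'
    (hp.mul (measurable_log.comp (hp.div ((hp.add hq).div_const 2)))).aestronglyMeasurable
    (ae_of_all _ fun x ↦ ?_)
  exact abs_klMidFun_le ENNReal.toReal_nonneg ENNReal.toReal_nonneg

lemma jsDiv_eq_integral {P Q μ : Measure α} [IsFiniteMeasure P] [IsFiniteMeasure Q]
    [IsFiniteMeasure μ] (hP : P ≪ μ) (hQ : Q ≪ μ) :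
    jsDiv P Q = ∫ x, jsFun (P.rnDeriv μ x).toReal (Q.rnDeriv μ x).toReal ∂μ := by
  rw [jsDiv, klDiv_mid_eq_integral hP hQ, add_comm P Q, klDiv_mid_eq_integral hQ hP,
    ← integral_add (integrable_klMidFun P Q μ) (integrable_klMidFun Q P μ)]
  rfl

lemma integrable_jsFun (P Q μ : Measure α) [IsFiniteMeasure P] [IsFiniteMeasure Q]
    [IsFiniteMeasure μ] :
    Integrable (fun x ↦ jsFun (P.rnDeriv μ x).toReal (Q.rnDeriv μ x).toReal) μ :=
  (integrable_klMidFun P Q μ).add (integrable_klMidFun Q P μ)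

end Densities

/-- The square root of the Jensen–Shannon divergence satisfies the triangle inequality:
`√JS(P‖Q) ≤ √JS(P‖R) + √JS(R‖Q)` for any probability measures `P, Q, R`. -/
theorem sqrt_jsDiv_triangle
    {α : Type*} [MeasurableSpace α] (P Q R : Measure α)
    [IsProbabilityMeasure P] [IsProbabilityMeasure Q] [IsProbabilityMeasure R] :
    Real.sqrt (jsDiv P Q) ≤ Real.sqrt (jsDiv P R) + Real.sqrt (jsDiv R Q) := by
  set μ := P + Q + R
  have hP : P ≪ μ := (Measure.AbsolutelyContinuous.rfl.add_right Q).add_right R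
  have hQ : Q ≪ μ := (Measure.AbsolutelyContinuous.rfl.add_right' P).add_right R
  have hR : R ≪ μ := Measure.AbsolutelyContinuous.rfl.add_right' (P + Q)
  have hdens {S : Measure α} : 0 ≤ᵐ[μ] fun x ↦ (S.rnDeriv μ x).toReal :=
    ae_of_all _ fun _ ↦ ENNReal.toReal_nonneg
  rw [jsDiv_eq_integral hP hQ, jsDiv_eq_integral hP hR, jsDiv_eq_integral hR hQ]
  refine sqrt_integral_le_add_of_sqrt_le (integrable_jsFun P Q μ) (integrable_jsFun P R μ)
    (integrable_jsFun R Q μ) ?_ ?_ ?_ ?_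
  all_goals filter_upwards [hdens (S := P), hdens (S := Q), hdens (S := R)] with x hp hq hr
  exacts [jsFun_nonneg hp hq, jsFun_nonneg hp hr, jsFun_nonneg hr hq, sqrt_jsFun_le_add hp hq hr]
end
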